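/- arXiv:1208.1223 — 7 statements merged into one kernel-verified Lean document; each statement's English description precedes it below -/
import Mathlib

section
/- Let (Ω, F, P) be a probability space, let N : Ω → ℕ be a random variable, and let λ > 0. Suppose that all descending factorial moments are bounded as E[N(N−1)⋯(N−m+1)] ≤ λ^m for every integer m ≥ 1. Then for every n ∈ ℕ, P(N = n) ≤ (λ^n / n!)·e^λ. -/
/-!
Markov's inequality for the `n`-th factorial moment: on `{N = n}` the variable
`N(N-1)⋯(N-n+1)` equals `n!`, so `n! · P(N = n) ≤ λ^n`; the factor `e^λ ≥ 1` is then free.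
-/

open MeasureTheory
open scoped ENNReal

section FactorialMoments

variable {Ω : Type*} [MeasurableSpace Ω] (μ : Measure Ω) {N : Ω → ℕ}

theorem factorial_mul_measure_eq_le_lintegral_descFactorial (hN : Measurable N) (n : ℕ) :
    (n.factorial : ℝ≥0∞) * μ {ω | N ω = n} ≤ ∫⁻ ω, ((N ω).descFactorial n : ℝ≥0∞) ∂μ := by
  have hsub : {ω | N ω = n} ⊆ {ω | (n.factorial : ℝ≥0∞) ≤ (N ω).descFactorial n} := by
    rintro ω rfl
    simp [Nat.descFactorial_self]
  calc (n.factorial : ℝ≥0∞) * μ {ω | N ω = n}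
      ≤ n.factorial * μ {ω | (n.factorial : ℝ≥0∞) ≤ (N ω).descFactorial n} := by
        gcongr
    _ ≤ ∫⁻ ω, ((N ω).descFactorial n : ℝ≥0∞) ∂μ :=
        mul_meas_ge_le_lintegral₀ (by fun_prop) _

theorem measure_eq_le_ofReal_div_factorial (hN : Measurable N) {n : ℕ} {c : ℝ}
    (hc : ∫⁻ ω, ((N ω).descFactorial n : ℝ≥0∞) ∂μ ≤ ENNReal.ofReal c) :
    μ {ω | N ω = n} ≤ ENNReal.ofReal (c / n.factorial) := by
  rw [ENNReal.ofReal_div_of_pos (mod_cast n.factorial_pos), ENNReal.ofReal_natCast,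
    ENNReal.le_div_iff_mul_le (.inl (mod_cast n.factorial_ne_zero))
      (.inl (ENNReal.natCast_ne_top _)), mul_comm]
  exact (factorial_mul_measure_eq_le_lintegral_descFactorial μ hN n).trans hc

end FactorialMoments

/-- If all descending factorial moments of an `ℕ`-valued random variable `N` are bounded
by `λ^m`, then `P(N = n) ≤ (λ^n / n!) e^λ`. -/
theorem prob_eq_le_of_factorial_moments
    {Ω : Type*} [MeasurableSpace Ω] (P : Measure Ω) [IsProbabilityMeasure P]
    (N : Ω → ℕ) (hN : Measurable N) (lam : ℝ) (hlam : 0 < lam)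
    (hmom : ∀ m : ℕ, 1 ≤ m →
      ∫⁻ ω, ((N ω).descFactorial m : ℝ≥0∞) ∂P ≤ ENNReal.ofReal (lam ^ m)) :
    ∀ n : ℕ, P {ω | N ω = n} ≤ ENNReal.ofReal (lam ^ n / n.factorial * Real.exp lam) := by
  intro n
  have hmarkov : P {ω | N ω = n} ≤ ENNReal.ofReal (lam ^ n / n.factorial) := by
    rcases n.eq_zero_or_pos with rfl | hn
    · simp [prob_le_one]
    · exact measure_eq_le_ofReal_div_factorial P hN (hmom n hn)
  exact hmarkov.trans <| ENNReal.ofReal_le_ofReal <|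
    le_mul_of_one_le_right (by positivity) (Real.one_le_exp hlam.le)
end

section
/- Let (Ω, F, P) be a probability space, let N : Ω → ℕ be a random variable, and let λ > 0. Suppose that E[N(N−1)⋯(N−m+1)] ≤ λ^m for every integer m ≥ 1. Then for every integer M with M > 2eλ, P(N ≥ M) ≤ 2·(eλ/M)^M·e^λ. -/
/-!
Since `(N)_M ≥ M!` on `{N ≥ M}`, Markov's inequality applied to the `M`-th factorial moment
gives `P(N ≥ M) ≤ λ^M / M!`, and `M! ≥ (M/e)^M` turns this into `(eλ/M)^M`.
-/

open MeasureTheory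
open scoped ENNReal Nat

theorem Nat.factorial_le_descFactorial {n k : ℕ} (h : k ≤ n) : k ! ≤ n.descFactorial k :=
  Nat.le_of_dvd (Nat.descFactorial_pos.2 h) (Nat.factorial_dvd_descFactorial n k)

theorem Real.pow_div_factorial_le_exp_one_mul_div_pow {x : ℝ} (hx : 0 ≤ x) (n : ℕ) :
    x ^ n / n ! ≤ (Real.exp 1 * x / n) ^ n := by
  rcases Nat.eq_zero_or_pos n with rfl | hn
  · simp
  have hn' : (n : ℝ) ≠ 0 := by positivity
  calc x ^ n / n ! = (x / n) ^ n * ((n : ℝ) ^ n / n !) := by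
        rw [mul_div_assoc', ← mul_pow, div_mul_cancel₀ x hn']
    _ ≤ (x / n) ^ n * Real.exp n := by
        gcongr; exact Real.pow_div_factorial_le_exp _ n.cast_nonneg n
    _ = (Real.exp 1 * x / n) ^ n := by rw [← Real.exp_one_pow]; ring

section FactorialMoments

variable {Ω : Type*} [MeasurableSpace Ω] (μ : Measure Ω) {N : Ω → ℕ}

theorem factorial_mul_measure_le_lintegral_descFactorial (hN : Measurable N) (k : ℕ) :
    (k ! : ℝ≥0∞) * μ {ω | k ≤ N ω} ≤ ∫⁻ ω, ((N ω).descFactorial k : ℝ≥0∞) ∂μ := by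
  have hS : MeasurableSet {ω | k ≤ N ω} := hN measurableSet_Ici
  rw [← lintegral_indicator_const hS]
  exact lintegral_mono <| Set.indicator_le fun ω hω ↦
    Nat.cast_le.2 (Nat.factorial_le_descFactorial hω)

theorem measure_le_le_ofReal_pow_div_factorial (hN : Measurable N) {lam : ℝ} {k : ℕ}
    (hmom : ∫⁻ ω, ((N ω).descFactorial k : ℝ≥0∞) ∂μ ≤ ENNReal.ofReal (lam ^ k)) :
    μ {ω | k ≤ N ω} ≤ ENNReal.ofReal (lam ^ k / k !) := by
  rw [ENNReal.ofReal_div_of_pos (mod_cast k.factorial_pos), ENNReal.ofReal_natCast,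
    ENNReal.le_div_iff_mul_le (by simp [k.factorial_ne_zero]) (by simp), mul_comm]
  exact (factorial_mul_measure_le_lintegral_descFactorial μ hN k).trans hmom

end FactorialMoments

theorem prob_tail_le_of_factorial_moments_general
    {Ω : Type*} [MeasurableSpace Ω] (P : Measure Ω) [IsProbabilityMeasure P]
    (N : Ω → ℕ) (hN : Measurable N) (lam : ℝ) (hlam : 0 < lam)
    (hmom : ∀ m : ℕ, 1 ≤ m →
      ∫⁻ ω, ((N ω).descFactorial m : ℝ≥0∞) ∂P ≤ ENNReal.ofReal (lam ^ m))
    (M : ℕ) :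
    P {ω | M ≤ N ω} ≤
      ENNReal.ofReal (2 * (Real.exp 1 * lam / M) ^ M * Real.exp lam) := by
  have hmomM : ∫⁻ ω, ((N ω).descFactorial M : ℝ≥0∞) ∂P ≤ ENNReal.ofReal (lam ^ M) := by
    rcases Nat.eq_zero_or_pos M with rfl | hM
    · simp
    · exact hmom M hM
  have hexp : 1 ≤ 2 * Real.exp lam := by linarith [Real.one_le_exp hlam.le]
  refine (measure_le_le_ofReal_pow_div_factorial P hN hmomM).trans (ENNReal.ofReal_le_ofReal ?_)
  calc lam ^ M / M ! ≤ (Real.exp 1 * lam / M) ^ M :=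
        Real.pow_div_factorial_le_exp_one_mul_div_pow hlam.le M
    _ ≤ 2 * Real.exp lam * (Real.exp 1 * lam / M) ^ M :=
        le_mul_of_one_le_left (by positivity) hexp
    _ = 2 * (Real.exp 1 * lam / M) ^ M * Real.exp lam := by ring

/-- If all descending factorial moments of an `ℕ`-valued random variable `N` are bounded
by `λ^m`, then for every integer `M > 2eλ`, `P(N ≥ M) ≤ 2 (eλ/M)^M e^λ`. -/
theorem prob_tail_le_of_factorial_moments
    {Ω : Type*} [MeasurableSpace Ω] (P : Measure Ω) [IsProbabilityMeasure P]
    (N : Ω → ℕ) (hN : Measurable N) (lam : ℝ) (hlam : 0 < lam)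
    (hmom : ∀ m : ℕ, 1 ≤ m →
      ∫⁻ ω, ((N ω).descFactorial m : ℝ≥0∞) ∂P ≤ ENNReal.ofReal (lam ^ m))
    (M : ℕ) (hM : 2 * Real.exp 1 * lam < (M : ℝ)) :
    P {ω | M ≤ N ω} ≤
      ENNReal.ofReal (2 * (Real.exp 1 * lam / M) ^ M * Real.exp lam) :=
  prob_tail_le_of_factorial_moments_general P N hN lam hlam hmom M
end

section
/- Let d ≥ 1, let ℓ, ε be reals with ℓ > 2ε > 0, and let c ∈ ℝ. Let v : (0,∞) → ℝ ∪ {+∞} satisfy v(r) ≤ −c for all r ∈ [ℓ−2ε, ℓ+2ε] and v(r) ≤ 0 for all r ≥ ℓ−2ε. Let S ⊆ ℤ^d be a finite nonempty nearest-neighbor connected set with n = |S| elements. For each k ∈ S let u_k := ℓk + (ℓ/2)(1,…,1) be the center of the cube C(k) = [k₁ℓ,(k₁+1)ℓ)×⋯×[k_dℓ,(k_d+1)ℓ), and let x_k ∈ ℝ^d satisfy |x_k − u_k| < ε. Then the total pair energy satisfies Σ_{{k,k'} ⊆ S, k ≠ k'} v(|x_k − x_{k'}|) ≤ −c·(n −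 1), the sum being over unordered pairs of distinct elements of S. -/
/-- Two lattice sites are nearest neighbors if their Euclidean distance is 1. -/
def latNN {d : ℕ} (a b : Fin d → ℤ) : Prop :=
  (∑ i, (a i - b i) ^ 2) = 1

/-- A set of lattice sites is (nearest-neighbor) connected if any two of its points are
joined by a nearest-neighbor path within the set. -/
def latConn {d : ℕ} (S : Set (Fin d → ℤ)) : Prop :=
  ∀ a ∈ S, ∀ b ∈ S,
    Relation.ReflTransGen (fun p q => p ∈ S ∧ q ∈ S ∧ latNN p q) a b

/-- The center of the cube `C(k) = [k₁ℓ,(k₁+1)ℓ) × ⋯ × [k_dℓ,(k_d+1)ℓ)`. -/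
noncomputable def cubeCenter {d : ℕ} (ℓ : ℝ) (kk : Fin d → ℤ) : EuclideanSpace ℝ (Fin d) :=
  WithLp.toLp 2 (fun i => ℓ * kk i + ℓ / 2)

/-!
Distinct cubes have centres at distance at least `ℓ`, neighbouring cubes at distance exactly `ℓ`,
so every pair of points is at distance `≥ ℓ - 2ε` (where `v ≤ 0`) and every neighbouring pair at
distance in `[ℓ - 2ε, ℓ + 2ε]` (where `v ≤ -c`). The neighbour graph on the cubes is connected,
hence has at least `n - 1` edges; bounding `n - 1` of them by `-c` and every other pair by `0`
gives the estimate.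
-/

open Finset

theorem Finset.sum_le_card_nsmul_of_subset {ι M : Type*} [AddCommMonoid M] [PartialOrder M]
    [IsOrderedAddMonoid M] [DecidableEq ι] {s t : Finset ι} (hts : t ⊆ s) (f : ι → M) (a : M)
    (ht : ∀ i ∈ t, f i ≤ a) (hs : ∀ i ∈ s \ t, f i ≤ 0) : ∑ i ∈ s, f i ≤ #t • a := by
  rw [← sum_sdiff hts]
  simpa using add_le_add (sum_nonpos hs) (sum_le_card_nsmul t f a ht)

theorem SimpleGraph.Connected.sum_sym2_filter_not_isDiag_le {V M : Type*} [Fintype V]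
    [DecidableEq V] [AddCommMonoid M] [PartialOrder M] [IsOrderedAddMonoid M]
    {G : SimpleGraph V} (hG : G.Connected) (w : Sym2 V → M) (a : M)
    (hedge : ∀ e ∈ G.edgeSet, w e ≤ a) (hoff : ∀ e, ¬e.IsDiag → w e ≤ 0) :
    ∑ e ∈ univ.sym2 with ¬e.IsDiag, w e ≤ (Fintype.card V - 1) • a := by
  classical
  have hcard : Fintype.card V - 1 ≤ #G.edgeFinset := by
    have := hG.card_vert_le_card_edgeSet_add_one
    rw [Nat.card_eq_fintype_card, Nat.card_eq_fintype_card, ← SimpleGraph.edgeFinset_card] at this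
    omega
  obtain ⟨T, hTG, hT⟩ := exists_subset_card_eq hcard
  have hTe : ∀ e ∈ T, e ∈ G.edgeSet := fun e he => SimpleGraph.mem_edgeFinset.mp (hTG he)
  rw [← hT]
  refine sum_le_card_nsmul_of_subset (fun e he => ?_) w a (fun e he => hedge e (hTe e he))
    (fun e he => hoff e ?_)
  · simpa using G.not_isDiag_of_mem_edgeSet (hTe e he)
  · simpa using (mem_sdiff.mp he).1

def latGraph (d : ℕ) : SimpleGraph (Fin d → ℤ) where
  Adj := latNN
  symm := ⟨fun a b h => by
    unfold latNN at *
    rw [← h]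
    exact sum_congr rfl fun i _ => by ring⟩
  loopless := ⟨fun a h => by simp [latNN] at h⟩

theorem latConn.connected_comap {ι : Type*} [Nonempty ι] {d : ℕ} {k : ι → Fin d → ℤ}
    (hconn : latConn (Set.range k)) (hk : Function.Injective k) :
    ((latGraph d).comap k).Connected := by
  refine ⟨fun i j => ?_⟩
  suffices ∀ b, Relation.ReflTransGen (fun p q => p ∈ Set.range k ∧ q ∈ Set.range k ∧ latNN p q)
      (k i) b → ∀ j, k j = b → ((latGraph d).comap k).Reachable i j from
    this _ (hconn _ ⟨i, rfl⟩ _ ⟨j, rfl⟩) j rfl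
  intro b hb
  induction hb with
  | refl => intro j hj; rw [hk hj]
  | tail _ hstep ih =>
    rintro j rfl
    obtain ⟨⟨m, rfl⟩, -, hnn⟩ := hstep
    exact (ih m rfl).trans (show ((latGraph d).comap k).Adj m j from hnn).reachable

theorem one_le_sum_sq_sub_of_ne {ι : Type*} [Fintype ι] {a b : ι → ℤ} (h : a ≠ b) :
    1 ≤ ∑ i, (a i - b i) ^ 2 := by
  obtain ⟨m, hm⟩ := Function.ne_iff.mp h
  calc 1 ≤ (a m - b m) ^ 2 :=
        (one_le_sq_iff_one_le_abs _).mpr (Int.one_le_abs (sub_ne_zero.mpr hm))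
    _ ≤ ∑ i, (a i - b i) ^ 2 := single_le_sum (fun i _ => sq_nonneg (a i - b i)) (mem_univ m)

theorem dist_cubeCenter {d : ℕ} (ℓ : ℝ) (a b : Fin d → ℤ) :
    dist (cubeCenter ℓ a) (cubeCenter ℓ b) = |ℓ| * √((∑ i, (a i - b i) ^ 2 : ℤ) : ℝ) := by
  have hcoord : ∀ i, dist (cubeCenter ℓ a i) (cubeCenter ℓ b i) ^ 2
      = ℓ ^ 2 * ((a i - b i : ℤ) : ℝ) ^ 2 := fun i => by
    rw [Real.dist_eq, sq_abs]
    simp only [cubeCenter, PiLp.toLp_apply]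
    push_cast
    ring
  rw [EuclideanSpace.dist_eq, sum_congr rfl fun i _ => hcoord i, ← mul_sum,
    Real.sqrt_mul (sq_nonneg ℓ), Real.sqrt_sq_eq_abs]
  push_cast
  rfl

theorem abs_le_dist_cubeCenter {d : ℕ} (ℓ : ℝ) {a b : Fin d → ℤ} (h : a ≠ b) :
    |ℓ| ≤ dist (cubeCenter ℓ a) (cubeCenter ℓ b) := by
  rw [dist_cubeCenter]
  refine le_mul_of_one_le_right (abs_nonneg ℓ) (Real.one_le_sqrt.mpr ?_)
  exact_mod_cast one_le_sum_sq_sub_of_ne h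

theorem dist_cubeCenter_of_latNN {d : ℕ} (ℓ : ℝ) {a b : Fin d → ℤ} (h : latNN a b) :
    dist (cubeCenter ℓ a) (cubeCenter ℓ b) = |ℓ| := by
  rw [dist_cubeCenter, show ∑ i, (a i - b i) ^ 2 = 1 from h]
  simp

theorem abs_dist_sub_dist_lt {α : Type*} [PseudoMetricSpace α] {x y u w : α} {ε : ℝ}
    (hx : dist x u < ε) (hy : dist y w < ε) : |dist x y - dist u w| < 2 * ε := by
  rw [← Real.dist_eq]
  linarith [dist_dist_dist_le x y u w]

section Perturbation

variable {d : ℕ} {ℓ ε : ℝ} {a b : Fin d → ℤ} {x y : EuclideanSpace ℝ (Fin d)}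

theorem sub_two_mul_lt_dist_of_ne (hab : a ≠ b) (hx : dist x (cubeCenter ℓ a) < ε)
    (hy : dist y (cubeCenter ℓ b) < ε) : ℓ - 2 * ε < dist x y := by
  have := abs_dist_sub_dist_lt hx hy
  linarith [abs_sub_lt_iff.mp this, abs_le_dist_cubeCenter ℓ hab, le_abs_self ℓ]

theorem dist_lt_add_two_mul_of_latNN (hℓ : 0 ≤ ℓ) (hab : latNN a b)
    (hx : dist x (cubeCenter ℓ a) < ε) (hy : dist y (cubeCenter ℓ b) < ε) :
    dist x y < ℓ + 2 * ε := by
  have := abs_dist_sub_dist_lt hx hy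
  rw [dist_cubeCenter_of_latNN ℓ hab, abs_of_nonneg hℓ] at this
  linarith [abs_sub_lt_iff.mp this]

end Perturbation

theorem energy_estimate_connected_cubes_general
    (d : ℕ) (ℓ ε c : ℝ) (hε : 0 < ε) (hℓ : 2 * ε < ℓ)
    (v : ℝ → EReal)
    (hv1 : ∀ r : ℝ, ℓ - 2 * ε ≤ r → r ≤ ℓ + 2 * ε → v r ≤ ((-c : ℝ) : EReal))
    (hv2 : ∀ r : ℝ, ℓ - 2 * ε ≤ r → v r ≤ 0)
    (n : ℕ) (hn : 1 ≤ n)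
    (k : Fin n → (Fin d → ℤ)) (hinj : Function.Injective k)
    (hconn : latConn (Set.range k))
    (x : Fin n → EuclideanSpace ℝ (Fin d))
    (hx : ∀ i, dist (x i) (cubeCenter ℓ (k i)) < ε) :
    (∑ p ∈ Finset.univ.filter (fun p : Fin n × Fin n => p.1 < p.2),
        v (dist (x p.1) (x p.2)))
      ≤ ((-c * ((n : ℝ) - 1) : ℝ) : EReal) := by
  have : Nonempty (Fin n) := ⟨⟨0, hn⟩⟩
  let w : Sym2 (Fin n) → EReal := Sym2.lift ⟨fun i j => v (dist (x i) (x j)),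
    fun i j => congrArg v (dist_comm _ _)⟩
  have hfar : ∀ i j, i ≠ j → ℓ - 2 * ε ≤ dist (x i) (x j) := fun i j hij =>
    (sub_two_mul_lt_dist_of_ne (hinj.ne hij) (hx i) (hx j)).le
  have hpairs : univ.filter (fun p : Fin n × Fin n => p.1 < p.2)
      = univ.offDiag.filter (fun p => p.1 < p.2) := by
    ext p
    simpa using fun h : p.1 < p.2 => h.ne
  calc _ = ∑ e ∈ univ.sym2 with ¬e.IsDiag, w e := by
        rw [sum_sym2_filter_not_isDiag, hpairs]; rfl
    _ ≤ (Fintype.card (Fin n) - 1) • ((-c : ℝ) : EReal) := by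
      refine (hconn.connected_comap hinj).sum_sym2_filter_not_isDiag_le w _ ?_ ?_
      · intro e he
        induction e using Sym2.ind with | _ i j
        rw [SimpleGraph.mem_edgeSet] at he
        exact hv1 _ (hfar i j he.ne)
          (dist_lt_add_two_mul_of_latNN (by linarith) he (hx i) (hx j)).le
      · intro e he
        induction e using Sym2.ind with | _ i j
        exact hv2 _ (hfar i j (by simpa using he))
    _ = _ := by
      rw [Fintype.card_fin, ← EReal.coe_nsmul, nsmul_eq_mul, Nat.cast_sub hn, Nat.cast_one,
        mul_comm]

/-- Energy estimate: if each `x_k` lies within `ε` of the center of the cube `C(k)` for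
`k` ranging over a finite nonempty nearest-neighbor connected set of `n` cubes, then the
total pair energy (sum over unordered pairs) is at most `-c(n-1)`. -/
theorem energy_estimate_connected_cubes
    (d : ℕ) (hd : 1 ≤ d) (ℓ ε c : ℝ) (hε : 0 < ε) (hℓ : 2 * ε < ℓ)
    (v : ℝ → EReal)
    (hv1 : ∀ r : ℝ, ℓ - 2 * ε ≤ r → r ≤ ℓ + 2 * ε → v r ≤ ((-c : ℝ) : EReal))
    (hv2 : ∀ r : ℝ, ℓ - 2 * ε ≤ r → v r ≤ 0)
    (n : ℕ) (hn : 1 ≤ n)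
    (k : Fin n → (Fin d → ℤ)) (hinj : Function.Injective k)
    (hconn : latConn (Set.range k))
    (x : Fin n → EuclideanSpace ℝ (Fin d))
    (hx : ∀ i, dist (x i) (cubeCenter ℓ (k i)) < ε) :
    (∑ p ∈ Finset.univ.filter (fun p : Fin n × Fin n => p.1 < p.2),
        v (dist (x p.1) (x p.2)))
      ≤ ((-c * ((n : ℝ) - 1) : ℝ) : EReal) :=
  energy_estimate_connected_cubes_general d ℓ ε c hε hℓ v hv1 hv2 n hn k hinj hconn x hx
end

section
/- Let d ≥ 1, R > 0 and let k ≥ 1 be an integer. Let Λ ⊆ ℝ^d, and let ω, ω' ⊆ ℝ^d be sets with ω ∩ Λ = ω' ∩ Λ. Let x ∈ ω ∩ Λ be a point whose Euclidean distance to the complement ℝ^d ∖ Λ is strictly greater than kR. Then the cluster of x in ω ∩ Λ has exactly k points if and only if the cluster of x in ω' has exactly k points (and in that case the two clusters coincide). -/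
/-!
A shortest path from `x` to a point of a finite cluster with `n` points visits distinct points
of the cluster, so it has fewer than `n` edges, each of length at most `R`; hence every point of
the cluster lies within distance `(n - 1) R` of `x`. If the cluster of `x` in one configuration
has `k` points, then it and all points within distance `R` of it lie in the closed ball of
radius `kR` about `x`. This ball is inside `Λ`, where `ω ∩ Λ` and `ω'` agree, so the cluster
grows identically in both configurations.
-/

/-- The connection relation: `a` and `b` are distinct points of the configuration `ω`
at Euclidean distance at most `R`. -/
def connRel {d : ℕ} (R : ℝ) (ω : Set (EuclideanSpace ℝ (Fin d)))
    (a b : EuclideanSpace ℝ (Fin d)) : Prop :=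
  a ∈ ω ∧ b ∈ ω ∧ a ≠ b ∧ dist a b ≤ R

/-- The cluster `C_ω(x)`: the set of points of `ω` connected to `x` in the geometric
graph `G_ω` with connection radius `R`. -/
def cluster {d : ℕ} (R : ℝ) (ω : Set (EuclideanSpace ℝ (Fin d)))
    (x : EuclideanSpace ℝ (Fin d)) : Set (EuclideanSpace ℝ (Fin d)) :=
  {y | y ∈ ω ∧ Relation.ReflTransGen (connRel R ω) x y}

theorem SimpleGraph.Walk.IsPath.length_lt_ncard {V : Type*} {G : SimpleGraph V} {u v : V}
    {p : G.Walk u v} (hp : p.IsPath) (hfin : {z | G.Reachable u z}.Finite) :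
    p.length < {z | G.Reachable u z}.ncard := by
  classical
  have hsupp : ↑p.support.toFinset ⊆ {z | G.Reachable u z} := fun z hz =>
    ⟨p.takeUntil z (List.mem_toFinset.mp hz)⟩
  calc p.length < p.support.length := by rw [Walk.length_support]; omega
    _ = p.support.toFinset.card := (List.toFinset_card_of_nodup hp.support_nodup).symm
    _ ≤ _ := by rw [← Set.ncard_coe_finset]; exact Set.ncard_le_ncard hsupp hfin

section MetricGraph

variable {α : Type*} [PseudoMetricSpace α] {G : SimpleGraph α} {R : ℝ}

theorem dist_le_length_mul_of_walk (hG : ∀ a b, G.Adj a b → dist a b ≤ R) {u v : α}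
    (p : G.Walk u v) : dist u v ≤ p.length * R := by
  induction p with
  | nil => simp
  | @cons u v w huv _ ih =>
    calc dist u w ≤ dist u v + dist v w := dist_triangle u v w
      _ ≤ R + _ := add_le_add (hG u v huv) ih
      _ = _ := by rw [SimpleGraph.Walk.length_cons]; push_cast; ring

theorem dist_add_le_ncard_mul_of_reachable (hG : ∀ a b, G.Adj a b → dist a b ≤ R)
    (hR : 0 ≤ R) {u v : α} (hfin : {z | G.Reachable u z}.Finite) (h : G.Reachable u v) :
    dist u v + R ≤ {z | G.Reachable u z}.ncard * R := by
  classical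
  obtain ⟨p⟩ := h
  have hlen : (p.bypass.length + 1 : ℝ) ≤ {z | G.Reachable u z}.ncard := by
    exact_mod_cast p.bypass_isPath.length_lt_ncard hfin
  calc dist u v + R ≤ p.bypass.length * R + R := by
        gcongr; exact dist_le_length_mul_of_walk hG p.bypass
    _ = (p.bypass.length + 1) * R := by ring
    _ ≤ _ := by gcongr

end MetricGraph

section Configuration

variable {d : ℕ} {R : ℝ} {ω ω₁ ω₂ : Set (EuclideanSpace ℝ (Fin d))}
  {x : EuclideanSpace ℝ (Fin d)}

def connGraph (R : ℝ) (ω : Set (EuclideanSpace ℝ (Fin d))) :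
    SimpleGraph (EuclideanSpace ℝ (Fin d)) where
  Adj := connRel R ω
  symm := ⟨fun a b ⟨ha, hb, hab, h⟩ => ⟨hb, ha, hab.symm, dist_comm a b ▸ h⟩⟩
  loopless := ⟨fun _ h => h.2.2.1 rfl⟩

theorem connGraph_adj : (connGraph R ω).Adj = connRel R ω := rfl

theorem cluster_eq_setOf_reachable (hx : x ∈ ω) :
    cluster R ω x = {y | (connGraph R ω).Reachable x y} := by
  ext y
  rw [Set.mem_ofPred_eq, SimpleGraph.reachable_iff_reflTransGen, connGraph_adj]
  refine ⟨fun h => h.2, fun h => ⟨?_, h⟩⟩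
  rcases h.cases_tail with rfl | ⟨_, _, hzy⟩
  exacts [hx, hzy.2.1]

theorem dist_add_le_ncard_mul_of_mem_cluster (hR : 0 ≤ R) (hx : x ∈ ω)
    (hfin : (cluster R ω x).Finite) {y : EuclideanSpace ℝ (Fin d)} (hy : y ∈ cluster R ω x) :
    dist x y + R ≤ (cluster R ω x).ncard * R := by
  rw [cluster_eq_setOf_reachable hx] at hfin hy ⊢
  exact dist_add_le_ncard_mul_of_reachable (G := connGraph R ω) (fun _ _ h => h.2.2.2) hR
    hfin hy

theorem cluster_subset_cluster (hx : x ∈ ω₂)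
    (h : ∀ b c, b ∈ cluster R ω₁ x → b ∈ cluster R ω₂ x → connRel R ω₁ b c → c ∈ ω₂) :
    cluster R ω₁ x ⊆ cluster R ω₂ x := by
  rintro y ⟨hy, hxy⟩
  induction hxy with
  | refl => exact ⟨hx, .refl⟩
  | @tail b c hxb hbc ih =>
    have hb₂ := ih hbc.1
    have hc₂ := h b c ⟨hbc.1, hxb⟩ hb₂ hbc
    exact ⟨hc₂, hb₂.2.tail ⟨hb₂.1, hc₂, hbc.2.2⟩⟩

theorem cluster_eq_of_inter_closedBall_eq (hR : 0 ≤ R) {k : ℕ}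
    (hω : ω₁ ∩ Metric.closedBall x (k * R) = ω₂ ∩ Metric.closedBall x (k * R)) (hx : x ∈ ω₁)
    (hfin : (cluster R ω₁ x).Finite) (hk : (cluster R ω₁ x).ncard ≤ k) :
    cluster R ω₁ x = cluster R ω₂ x := by
  have hnear : ∀ b ∈ cluster R ω₁ x, ∀ c, dist b c ≤ R → (c ∈ ω₁ ↔ c ∈ ω₂) := by
    intro b hb c hbc
    have hc : c ∈ Metric.closedBall x (k * R) := by
      have hxb := dist_add_le_ncard_mul_of_mem_cluster hR hx hfin hb
      have hnk : ((cluster R ω₁ x).ncard : ℝ) * R ≤ k * R := by gcongr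
      rw [Metric.mem_closedBall, dist_comm]
      linarith [dist_triangle x b c]
    simpa [hc] using Set.ext_iff.mp hω c
  have hx₂ : x ∈ ω₂ := (hnear x ⟨hx, .refl⟩ x (by simpa)).1 hx
  refine (cluster_subset_cluster hx₂ fun b c hb₁ _ hbc => ?_).antisymm
    (cluster_subset_cluster hx fun b c _ hb₁ hbc => ?_)
  exacts [(hnear b hb₁ c hbc.2.2.2).1 hbc.2.1, (hnear b hb₁ c hbc.2.2.2).2 hbc.2.1]

end Configuration

theorem cluster_locality_general
    (d : ℕ) (R : ℝ) (hR : 0 < R) (k : ℕ)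
    (Λ ω ω' : Set (EuclideanSpace ℝ (Fin d))) (hωω' : ω ∩ Λ = ω' ∩ Λ)
    (x : EuclideanSpace ℝ (Fin d)) (hx : x ∈ ω ∩ Λ)
    (hdist : (k : ℝ) * R < Metric.infDist x Λᶜ) :
    ((cluster R (ω ∩ Λ) x).Finite ∧ (cluster R (ω ∩ Λ) x).ncard = k ↔
      (cluster R ω' x).Finite ∧ (cluster R ω' x).ncard = k) ∧
    ((cluster R (ω ∩ Λ) x).Finite ∧ (cluster R (ω ∩ Λ) x).ncard = k →
      cluster R (ω ∩ Λ) x = cluster R ω' x) := by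
  have hball : Metric.closedBall x (k * R) ⊆ Λ := by
    simpa using (Metric.closedBall_subset_ball hdist).trans Metric.ball_infDist_subset_compl
  have hω : ω ∩ Λ ∩ Metric.closedBall x (k * R) = ω' ∩ Metric.closedBall x (k * R) := by
    rw [hωω', Set.inter_assoc, Set.inter_eq_right.mpr hball]
  have hx' : x ∈ ω' := (hωω' ▸ hx).1
  have forward : (cluster R (ω ∩ Λ) x).Finite ∧ (cluster R (ω ∩ Λ) x).ncard = k →
      cluster R (ω ∩ Λ) x = cluster R ω' x := fun ⟨hfin, hcard⟩ =>
    cluster_eq_of_inter_closedBall_eq hR.le hω hx hfin hcard.le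
  have backward : (cluster R ω' x).Finite ∧ (cluster R ω' x).ncard = k →
      cluster R ω' x = cluster R (ω ∩ Λ) x := fun ⟨hfin, hcard⟩ =>
    cluster_eq_of_inter_closedBall_eq hR.le hω.symm hx' hfin hcard.le
  exact ⟨⟨fun h => forward h ▸ h, fun h => backward h ▸ h⟩, forward⟩

/-- Locality of the `k`-cluster property: if `ω` and `ω'` agree inside `Λ` and `x ∈ ω ∩ Λ`
is at distance greater than `kR` from the complement of `Λ`, then the cluster of `x` in
`ω ∩ Λ` has exactly `k` points iff the cluster of `x` in `ω'` does, and in that case the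
two clusters coincide. -/
theorem cluster_locality
    (d : ℕ) (hd : 1 ≤ d) (R : ℝ) (hR : 0 < R) (k : ℕ) (hk : 1 ≤ k)
    (Λ ω ω' : Set (EuclideanSpace ℝ (Fin d))) (hωω' : ω ∩ Λ = ω' ∩ Λ)
    (x : EuclideanSpace ℝ (Fin d)) (hx : x ∈ ω ∩ Λ)
    (hdist : (k : ℝ) * R < Metric.infDist x Λᶜ) :
    ((cluster R (ω ∩ Λ) x).Finite ∧ (cluster R (ω ∩ Λ) x).ncard = k ↔
      (cluster R ω' x).Finite ∧ (cluster R ω' x).ncard = k) ∧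
    ((cluster R (ω ∩ Λ) x).Finite ∧ (cluster R (ω ∩ Λ) x).ncard = k →
      cluster R (ω ∩ Λ) x = cluster R ω' x) :=
  cluster_locality_general d R hR k Λ ω ω' hωω' x hx hdist
end

section
/- Let d ≥ 1, let v : (0,∞) → ℝ ∪ {+∞} be measurable, and for x₁,…,x_k ∈ ℝ^d set U(x₁,…,x_k) := Σ_{1≤i<j≤k} v(|x_i − x_j|). Let E_k := inf{U(x₁,…,x_k) : x₁,…,x_k ∈ ℝ^d} (with E₁ := 0), and assume e_∞ := inf_{k≥1} E_k/k > −∞. Fix R > 0 and β > 0. Then for every k ≥ 1 the cluster partition function satisfies Z_k^cl(β) ≤ exp(−βk·e_∞)·e^k·|B(0,R)|^{k−1}, where |B(0,R)| is the Lebesgue measure of the Euclidean ball of radius R in ℝ^d. -/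
/-!
The Boltzmann factor is at most `exp(-βk e_∞)`. An `R`-connected configuration
`0, y₁, …, y_j` has a breadth-first spanning tree rooted at `0`, so it lies in one of the sets
"each `yᵢ` within `R` of its parent", indexed by the `(j+1)^j` parent maps. Subtracting from
each point its parent is a unipotent linear change of variables, so each such set has volume
exactly `|B(0,R)|^j`. Finally `(j+1)^j / (j+1)! ≤ e^(j+1)`.
-/

open MeasureTheory
open scoped ENNReal

noncomputable section

/-- Total pair energy `U(x₁,…,x_m) = Σ_{i<j} v(|x_i - x_j|)` of a finite configuration,
with values in `ℝ ∪ {±∞}`. -/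
def pairEnergy {d : ℕ} (v : ℝ → EReal) {m : ℕ}
    (f : Fin m → EuclideanSpace ℝ (Fin d)) : EReal :=
  ∑ p ∈ Finset.univ.filter (fun p : Fin m × Fin m => p.1 < p.2),
    v (dist (f p.1) (f p.2))

/-- Boltzmann weight `exp(-βE)` with the convention `exp(-∞) = 0` (for `E = +∞`). -/
def boltz (β : ℝ) (E : EReal) : ℝ≥0∞ :=
  if E = ⊤ then 0 else ENNReal.ofReal (Real.exp (-β * E.toReal))

/-- A finite set `S ⊆ ℝ^d` is `R`-connected if the graph on `S` with an edge between
distinct points at distance `≤ R` is connected. -/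
def RConn {d : ℕ} (R : ℝ) (S : Set (EuclideanSpace ℝ (Fin d))) : Prop :=
  ∀ a ∈ S, ∀ b ∈ S,
    Relation.ReflTransGen (fun p q => p ∈ S ∧ q ∈ S ∧ p ≠ q ∧ dist p q ≤ R) a b

/-- The cluster partition function `Z_k^cl(β)` for `k = j+1` particles:
`Z_k^cl(β) = (1/k!) ∫ exp(-βU(0,x₂,…,x_k)) 1({0,x₂,…,x_k} R-connected) dx₂⋯dx_k`. -/
def Zcl (d : ℕ) (v : ℝ → EReal) (β R : ℝ) (j : ℕ) : ℝ≥0∞ :=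
  ((j + 1).factorial : ℝ≥0∞)⁻¹ *
    ∫⁻ y : Fin j → EuclideanSpace ℝ (Fin d),
      Set.indicator
        {y : Fin j → EuclideanSpace ℝ (Fin d) |
          RConn R (Set.range (Fin.cons (0 : EuclideanSpace ℝ (Fin d)) y))}
        (fun y => boltz β (pairEnergy v (Fin.cons (0 : EuclideanSpace ℝ (Fin d)) y))) y

open Metric

section ParentShift

variable (𝕜 M : Type*) [Semiring 𝕜] [AddCommMonoid M] [Module 𝕜 M] {ι : Type*}

def parentShift (parent : ι → Option ι) : (ι → M) →ₗ[𝕜] (ι → M) :=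
  LinearMap.pi fun i => (parent i).elim 0 (LinearMap.proj (R := 𝕜) (φ := fun _ => M))

variable {𝕜 M}

@[simp] lemma parentShift_apply (parent : ι → Option ι) (y : ι → M) (i : ι) :
    parentShift 𝕜 M parent y i = (parent i).elim 0 y := by
  simp only [parentShift, LinearMap.pi_apply]
  cases parent i <;> rfl

lemma parentShift_pow_apply_eq_zero {parent : ι → Option ι} {rank : ι → ℕ}
    (hrank : ∀ i k, parent i = some k → rank k < rank i) (n : ℕ) (y : ι → M) (i : ι)
    (hi : rank i < n) : (parentShift 𝕜 M parent ^ n) y i = 0 := by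
  induction n generalizing i with
  | zero => exact absurd hi (Nat.not_lt_zero _)
  | succ n ih =>
    rw [pow_succ', Module.End.mul_apply, parentShift_apply]
    cases h : parent i with
    | none => rfl
    | some k => exact ih k (by have := hrank i k h; omega)

lemma isNilpotent_parentShift [Finite ι] {parent : ι → Option ι} {rank : ι → ℕ}
    (hrank : ∀ i k, parent i = some k → rank k < rank i) :
    IsNilpotent (parentShift 𝕜 M parent) := by
  obtain ⟨N, hN⟩ := (Set.finite_range rank).bddAbove
  exact ⟨N + 1, LinearMap.ext fun y => funext fun i =>
    parentShift_pow_apply_eq_zero hrank _ y i (Nat.lt_succ_of_le (hN ⟨i, rfl⟩))⟩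

end ParentShift

lemma LinearMap.det_one_sub_of_isNilpotent {K M : Type*} [Field K] [AddCommGroup M] [Module K M]
    [Module.Finite K M] {f : Module.End K M} (hf : IsNilpotent f) :
    LinearMap.det (1 - f) = 1 := by
  have := f.eval_charpoly 1
  rw [hf.charpoly_eq_X_pow_finrank, map_one] at this
  simpa using this.symm

/-- The increment map `y ↦ (y i - y (parent i))ᵢ` is unipotent, hence volume preserving, and it
maps the set onto a product of balls. -/
lemma measure_pi_setOf_forall_dist_parent_le {E : Type*} [NormedAddCommGroup E]
    [NormedSpace ℝ E] [MeasurableSpace E] [BorelSpace E] [FiniteDimensional ℝ E]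
    (μ : Measure E) [μ.IsAddHaarMeasure] {ι : Type*} [Fintype ι] {parent : ι → Option ι}
    {rank : ι → ℕ} (hrank : ∀ i k, parent i = some k → rank k < rank i) (R : ℝ) :
    Measure.pi (fun _ : ι => μ) {y | ∀ i, dist (y i) ((parent i).elim 0 y) ≤ R}
      = μ (closedBall 0 R) ^ Fintype.card ι := by
  have hdet : LinearMap.det (1 - parentShift ℝ E parent) = 1 :=
    LinearMap.det_one_sub_of_isNilpotent (isNilpotent_parentShift hrank)
  have hpre : {y : ι → E | ∀ i, dist (y i) ((parent i).elim 0 y) ≤ R}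
      = ⇑(1 - parentShift ℝ E parent) ⁻¹' Set.univ.pi fun _ => closedBall (0 : E) R := by
    ext y
    simp [dist_eq_norm]
  rw [hpre, Measure.addHaar_preimage_linearMap _ (by simp [hdet]), hdet, Measure.pi_pi]
  simp

namespace Relation

variable {α : Type*} (r : α → α → Prop) (a : α)

def StepsTo : ℕ → α → Prop
  | 0, p => p = a
  | n + 1, p => ∃ q, r p q ∧ StepsTo n q

variable {r a}

lemma ReflTransGen.exists_stepsTo {p : α} (h : ReflTransGen r p a) : ∃ n, StepsTo r a n p := by
  induction h using ReflTransGen.head_induction_on with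
  | refl => exact ⟨0, rfl⟩
  | head hpq _ ih =>
    obtain ⟨n, hn⟩ := ih
    exact ⟨n + 1, _, hpq, hn⟩

/-- Breadth-first search: ranked by its step distance to `a`, every point gets a parent one step
closer to `a`, where the parent `none` stands for `a` itself. -/
lemma exists_parent_rank_of_reflTransGen {ι : Type*} (y : ι → α) (ha : r a a)
    (hy : ∀ i, ReflTransGen (fun p q => r p q ∧ q ∈ insert a (Set.range y)) (y i) a) :
    ∃ (parent : ι → Option ι) (rank : ι → ℕ),
      (∀ i k, parent i = some k → rank k < rank i) ∧ ∀ i, r (y i) ((parent i).elim a y) := by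
  classical
  have hsteps i := (hy i).exists_stepsTo
  let rank i := Nat.find (hsteps i)
  have step : ∀ i, ∃ o : Option ι, (∀ k, o = some k → rank k < rank i) ∧ r (y i) (o.elim a y) := by
    intro i
    have hspec : StepsTo _ a (rank i) (y i) := Nat.find_spec (hsteps i)
    rcases hrank : rank i with _ | m
    · rw [hrank] at hspec
      exact ⟨none, by simp, by rwa [show y i = a from hspec]⟩
    · rw [hrank] at hspec
      obtain ⟨q, ⟨hrq, hq⟩, hqm⟩ := hspec
      rcases hq with rfl | ⟨k, rfl⟩
      · exact ⟨none, by simp, hrq⟩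
      · exact ⟨some k, fun k' hk' => by
          cases hk'; exact Nat.lt_succ_of_le (Nat.find_min' (hsteps k) hqm), hrq⟩
  choose parent hparent using step
  exact ⟨parent, rank, fun i k h => (hparent i).1 k h, fun i => (hparent i).2⟩

end Relation

lemma boltz_le_of_coe_le {β : ℝ} (hβ : 0 ≤ β) {c : ℝ} {E : EReal} (h : (c : EReal) ≤ E) :
    boltz β E ≤ ENNReal.ofReal (Real.exp (-β * c)) := by
  unfold boltz
  split_ifs with hE
  · exact zero_le
  · have hc : c ≤ E.toReal := by
      simpa using EReal.toReal_le_toReal h (EReal.coe_ne_bot c) hE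
    exact ENNReal.ofReal_le_ofReal (Real.exp_le_exp.2 (by nlinarith))

lemma succ_pow_div_factorial_le_exp (j : ℕ) :
    ((j + 1 : ℝ≥0∞)) ^ j / (j + 1).factorial ≤ ENNReal.ofReal (Real.exp (j + 1)) := by
  have hreal : ((j : ℝ) + 1) ^ j / (j + 1).factorial ≤ Real.exp (j + 1) :=
    calc ((j : ℝ) + 1) ^ j / (j + 1).factorial
        ≤ ((j : ℝ) + 1) ^ (j + 1) / (j + 1).factorial := by
          gcongr
          · linarith [j.cast_nonneg (α := ℝ)]
          · omega
      _ ≤ Real.exp (j + 1) := Real.pow_div_factorial_le_exp _ (by positivity) _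
  calc ((j + 1 : ℝ≥0∞)) ^ j / (j + 1).factorial
      = ENNReal.ofReal (((j : ℝ) + 1) ^ j / (j + 1).factorial) := by
        rw [ENNReal.ofReal_div_of_pos (by positivity), ENNReal.ofReal_pow (by positivity)]
        norm_cast
    _ ≤ _ := ENNReal.ofReal_le_ofReal hreal

lemma volume_setOf_rConn_le (d j : ℕ) {R : ℝ} (hR : 0 ≤ R) :
    volume {y : Fin j → EuclideanSpace ℝ (Fin d) | RConn R (Set.range (Fin.cons 0 y))}
      ≤ (j + 1 : ℝ≥0∞) ^ j * volume (closedBall (0 : EuclideanSpace ℝ (Fin d)) R) ^ j := by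
  classical
  set C := volume (closedBall (0 : EuclideanSpace ℝ (Fin d)) R) with hC
  let forests : Finset (Fin j → Option (Fin j)) := Finset.univ.filter fun parent =>
    ∃ rank : Fin j → ℕ, ∀ i k, parent i = some k → rank k < rank i
  have hcover : {y : Fin j → EuclideanSpace ℝ (Fin d) | RConn R (Set.range (Fin.cons 0 y))}
      ⊆ ⋃ parent ∈ forests, {y | ∀ i, dist (y i) ((parent i).elim 0 y) ≤ R} := by
    intro y hy
    have hpath (i : Fin j) := Relation.ReflTransGen.mono
      (p := fun p q => dist p q ≤ R ∧ q ∈ insert 0 (Set.range y))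
      (fun p q h => ⟨h.2.2.2, Fin.range_cons (0 : EuclideanSpace ℝ (Fin d)) y ▸ h.2.1⟩)
      _ _ (hy (y i) ⟨i.succ, by simp⟩ 0 ⟨0, rfl⟩)
    obtain ⟨parent, rank, hrank, hdist⟩ :=
      Relation.exists_parent_rank_of_reflTransGen y (by simpa using hR) hpath
    exact Set.mem_biUnion (Finset.mem_filter.2 ⟨Finset.mem_univ _, rank, hrank⟩) hdist
  calc _ ≤ ∑ parent ∈ forests, volume {y : Fin j → EuclideanSpace ℝ (Fin d) |
          ∀ i, dist (y i) ((parent i).elim 0 y) ≤ R} :=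
        (measure_mono hcover).trans (measure_biUnion_finset_le _ _)
    _ = ∑ _parent ∈ forests, C ^ j := by
        refine Finset.sum_congr rfl fun parent hparent => ?_
        obtain ⟨rank, hrank⟩ := (Finset.mem_filter.1 hparent).2
        rw [volume_pi, measure_pi_setOf_forall_dist_parent_le _ hrank, Fintype.card_fin]
    _ ≤ ∑ _parent : Fin j → Option (Fin j), C ^ j :=
        Finset.sum_le_sum_of_subset (Finset.filter_subset _ _)
    _ = (j + 1 : ℝ≥0∞) ^ j * C ^ j := by simp

theorem Zcl_le_general (d : ℕ) (hd : 1 ≤ d)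
    (v : ℝ → EReal)
    (einf : ℝ)
    (heinf : ∀ (m : ℕ) (f : Fin (m + 1) → EuclideanSpace ℝ (Fin d)),
      ((((m : ℝ) + 1) * einf : ℝ) : EReal) ≤ pairEnergy v f)
    (β R : ℝ) (hβ : 0 < β) (hR : 0 < R) (j : ℕ) :
    Zcl d v β R j ≤
      ENNReal.ofReal (Real.exp (-β * ((j : ℝ) + 1) * einf) * Real.exp ((j : ℝ) + 1)) *
        (volume (Metric.ball (0 : EuclideanSpace ℝ (Fin d)) R)) ^ j := by
  have : Nonempty (Fin d) := ⟨⟨0, hd⟩⟩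
  set Conn := {y : Fin j → EuclideanSpace ℝ (Fin d) | RConn R (Set.range (Fin.cons 0 y))}
  set B := ENNReal.ofReal (Real.exp (-β * ((j : ℝ) + 1) * einf))
  set C := volume (closedBall (0 : EuclideanSpace ℝ (Fin d)) R) with hC
  have hboltz (y : Fin j → EuclideanSpace ℝ (Fin d)) :
      boltz β (pairEnergy v (Fin.cons 0 y)) ≤ B := by
    simpa [B, mul_assoc] using boltz_le_of_coe_le hβ.le (heinf j (Fin.cons 0 y))
  calc Zcl d v β R j ≤ ((j + 1).factorial : ℝ≥0∞)⁻¹ * (B * volume Conn) := by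
        unfold Zcl
        gcongr
        exact (lintegral_mono fun y => Set.indicator_le_indicator (hboltz y)).trans
          (lintegral_indicator_const_le _ _)
    _ ≤ ((j + 1).factorial : ℝ≥0∞)⁻¹ * (B * ((j + 1 : ℝ≥0∞) ^ j * C ^ j)) := by
        gcongr
        exact volume_setOf_rConn_le d j hR.le
    _ = B * ((j + 1 : ℝ≥0∞) ^ j / (j + 1).factorial) * C ^ j := by
        rw [ENNReal.div_eq_inv_mul]
        ring
    _ ≤ B * ENNReal.ofReal (Real.exp ((j : ℝ) + 1)) *
          volume (ball (0 : EuclideanSpace ℝ (Fin d)) R) ^ j := by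
        rw [hC, Measure.addHaar_closedBall_eq_addHaar_ball]
        gcongr
        exact succ_pow_div_factorial_le_exp j
    _ = _ := by rw [ENNReal.ofReal_mul (Real.exp_nonneg _)]

/-- Bound on the cluster partition function: if `e_∞` is a lower bound for all the
energies per particle `E_k/k` (in particular if it is their infimum, assumed `> -∞`),
then `Z_k^cl(β) ≤ exp(-βk e_∞) e^k |B(0,R)|^{k-1}`, for `k = j+1 ≥ 1`. -/
theorem Zcl_le (d : ℕ) (hd : 1 ≤ d)
    (v : ℝ → EReal) (hmeas : Measurable v) (hbot : ∀ r, v r ≠ ⊥)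
    (einf : ℝ)
    (heinf : ∀ (m : ℕ) (f : Fin (m + 1) → EuclideanSpace ℝ (Fin d)),
      ((((m : ℝ) + 1) * einf : ℝ) : EReal) ≤ pairEnergy v f)
    (β R : ℝ) (hβ : 0 < β) (hR : 0 < R) (j : ℕ) :
    Zcl d v β R j ≤
      ENNReal.ofReal (Real.exp (-β * ((j : ℝ) + 1) * einf) * Real.exp ((j : ℝ) + 1)) *
        (volume (Metric.ball (0 : EuclideanSpace ℝ (Fin d)) R)) ^ j :=
  Zcl_le_general d hd v einf heinf β R hβ hR j

end
end

section
/- Let d ≥ 1, let v : (0,∞) → ℝ ∪ {+∞} be measurable, let U, E_k and e_∞ := inf_{k≥1} E_k/k be as usual with e_∞ > −∞, and fix R > 0 and β > 0. Then for every real z with 0 < z < exp(β·e_∞)/(e·|B(0,R)|), the series Σ_{k=1}^∞ z^k Z_k^cl(β) converges; in particular the radius of convergence R^cl(β) of the power series Σ_k Z_k^cl(β) z^k satisfies R^cl(β) ≥ exp(β·e_∞)/(e·|B(0,R)|). -/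
open MeasureTheory
open scoped ENNReal

noncomputable section

/-! If `{0, x₁, …, x_j}` is `R`-connected, a breadth-first spanning tree rooted at `0` gives every
`x_i` a parent at distance `≤ R`, so the connectivity indicator is at most a sum, over the at most
`(j + 1) ^ j` acyclic parent maps, of products of ball indicators. Integrating out a leaf at a time,
each such product integrates to `|B(0,R)| ^ j`. Together with `exp(-βU) ≤ exp(-β(j + 1)e_∞)` and
`(j + 1) ^ j / (j + 1)! ≤ e ^ (j + 1)` this gives `Z_{j+1}^cl ≤ (e^{1 - βe_∞}) ^ (j + 1) |B(0,R)| ^ j`,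
so the series is dominated by a geometric series of ratio `z e^{1 - βe_∞} |B(0,R)| < 1`. -/

open Metric

theorem SimpleGraph.Reachable.exists_adj_dist_lt {V : Type*} {G : SimpleGraph V}
    {u v : V} (h : G.Reachable u v) (hne : u ≠ v) :
    ∃ w, G.Adj u w ∧ G.dist w v < G.dist u v := by
  obtain ⟨p, hp⟩ := h.exists_walk_length_eq_dist
  cases p with
  | nil => exact absurd rfl hne
  | cons hadj p =>
    refine ⟨_, hadj, (SimpleGraph.dist_le p).trans_lt ?_⟩
    rw [← hp, SimpleGraph.Walk.length_cons]
    omega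

theorem succ_pow_le_exp_one_pow_mul_factorial (n : ℕ) :
    ((n : ℝ) + 1) ^ n ≤ Real.exp 1 ^ (n + 1) * (n + 1).factorial := by
  have h := Real.pow_div_factorial_le_exp (x := (n : ℝ) + 1) (by positivity) (n + 1)
  calc ((n : ℝ) + 1) ^ n ≤ ((n : ℝ) + 1) ^ (n + 1) :=
        pow_le_pow_right₀ (by linarith [n.cast_nonneg (α := ℝ)]) n.le_succ
    _ ≤ Real.exp ((n : ℝ) + 1) * (n + 1).factorial := by rwa [div_le_iff₀ (by positivity)] at h
    _ = Real.exp 1 ^ (n + 1) * (n + 1).factorial := by rw [Real.exp_one_pow]; push_cast; rfl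

theorem succ_pow_div_factorial_le (n : ℕ) :
    ((n : ℝ≥0∞) + 1) ^ n / (n + 1).factorial ≤ ENNReal.ofReal (Real.exp 1) ^ (n + 1) := by
  refine ENNReal.div_le_of_le_mul ?_
  have hpow : ((n : ℝ≥0∞) + 1) ^ n = ENNReal.ofReal (((n : ℝ) + 1) ^ n) := by
    rw [ENNReal.ofReal_pow (by positivity), ENNReal.ofReal_add (by positivity) zero_le_one,
      ENNReal.ofReal_natCast, ENNReal.ofReal_one]
  rw [hpow, ← ENNReal.ofReal_natCast, ← ENNReal.ofReal_pow (Real.exp_nonneg 1),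
    ← ENNReal.ofReal_mul (by positivity)]
  exact ENNReal.ofReal_le_ofReal (succ_pow_le_exp_one_pow_mul_factorial n)

theorem ENNReal.tsum_pow_succ_mul_pow_lt_top {ρ B : ℝ≥0∞} (hρ : ρ ≠ ⊤) (h : ρ * B < 1) :
    ∑' j : ℕ, ρ ^ (j + 1) * B ^ j < ⊤ := by
  simp_rw [pow_succ', mul_assoc, ← mul_pow]
  rw [ENNReal.tsum_mul_left, ENNReal.tsum_geometric]
  exact ENNReal.mul_lt_top hρ.lt_top (ENNReal.inv_lt_top.2 (tsub_pos_of_lt h))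

namespace Cluster

/-- `q i` is the parent of vertex `i.succ` of `Fin (j + 1)`; vertex `0` is the root. -/
def Acyclic {j : ℕ} (q : Fin j → Fin (j + 1)) : Prop :=
  ∃ rank : Fin (j + 1) → ℕ, ∀ i, rank (q i) < rank i.succ

theorem Acyclic.exists_removeLeaf {j : ℕ} {q : Fin (j + 1) → Fin (j + 2)} (hq : Acyclic q) :
    ∃ (ℓ p : Fin (j + 1)) (q' : Fin j → Fin (j + 1)), Acyclic q' ∧
      q ℓ = ℓ.succ.succAbove p ∧ ∀ c, q (ℓ.succAbove c) = ℓ.succ.succAbove (q' c) := by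
  obtain ⟨rank, hrank⟩ := hq
  obtain ⟨ℓ, hℓ⟩ := Finite.exists_max (rank ∘ Fin.succ)
  have hleaf : ∀ i, q i ≠ ℓ.succ := fun i h => (hrank i).not_ge (h ▸ hℓ i)
  choose lift hlift using fun i => Fin.exists_succAbove_eq (hleaf i)
  refine ⟨ℓ, lift ℓ, fun c => lift (ℓ.succAbove c), ⟨rank ∘ ℓ.succ.succAbove, fun c => ?_⟩,
    (hlift ℓ).symm, fun c => (hlift _).symm⟩
  simp only [Function.comp_apply, hlift, Fin.succ_succAbove_succ]
  exact hrank _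

theorem exists_acyclic_of_reachable {j : ℕ} (G : SimpleGraph (Fin (j + 1)))
    (h : ∀ i, G.Reachable i 0) : ∃ q : Fin j → Fin (j + 1), Acyclic q ∧ ∀ i, G.Adj i.succ (q i) := by
  choose q hadj hlt using fun i : Fin j => (h i.succ).exists_adj_dist_lt (Fin.succ_ne_zero i)
  exact ⟨q, ⟨fun v => G.dist v 0, hlt⟩, hadj⟩

def proximityGraph {V X : Type*} [PseudoMetricSpace X] (R : ℝ) (pos : V → X) : SimpleGraph V where
  Adj a b := a ≠ b ∧ dist (pos a) (pos b) ≤ R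
  symm := ⟨fun _ _ h => ⟨h.1.symm, by rw [dist_comm]; exact h.2⟩⟩
  loopless := ⟨fun _ h => h.1 rfl⟩

theorem preconnected_proximityGraph {d : ℕ} {V : Type*} {R : ℝ} (hR : 0 ≤ R)
    {pos : V → EuclideanSpace ℝ (Fin d)} (h : RConn R (Set.range pos)) :
    (proximityGraph R pos).Preconnected := by
  have of_eq : ∀ a b, pos a = pos b → (proximityGraph R pos).Reachable a b := by
    intro a b hab
    by_cases hne : a = b
    · exact hne ▸ .rfl
    · exact SimpleGraph.Adj.reachable ⟨hne, by rw [hab, dist_self]; exact hR⟩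
  intro a b
  suffices ∀ x, Relation.ReflTransGen _ (pos a) x → ∀ b, pos b = x →
      (proximityGraph R pos).Reachable a b from this _ (h _ ⟨a, rfl⟩ _ ⟨b, rfl⟩) b rfl
  intro x hx
  induction hx with
  | refl => exact fun b hb => of_eq a b hb.symm
  | tail _ hstep ih =>
    intro b hb
    obtain ⟨m, rfl⟩ := hstep.1
    exact (ih m rfl).trans (SimpleGraph.Adj.reachable
      ⟨fun hmb => hstep.2.2.1 (hmb ▸ hb), hb ▸ hstep.2.2.2⟩)

section TreeWeight

variable {E : Type*} [NormedAddCommGroup E]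

def treeWeight (R : ℝ) {j : ℕ} (q : Fin j → Fin (j + 1)) (y : Fin j → E) : ℝ≥0∞ :=
  ∏ i, (closedBall ((Fin.cons 0 y : Fin (j + 1) → E) (q i)) R).indicator 1 (y i)

theorem treeWeight_eq_one {R : ℝ} {j : ℕ} {q : Fin j → Fin (j + 1)} {y : Fin j → E}
    (h : ∀ i, dist (y i) ((Fin.cons 0 y : Fin (j + 1) → E) (q i)) ≤ R) :
    treeWeight R q y = 1 :=
  Finset.prod_eq_one fun i _ => by rw [Set.indicator_of_mem (mem_closedBall.2 (h i)), Pi.one_apply]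

theorem treeWeight_insertNth {R : ℝ} {j : ℕ} {q : Fin (j + 1) → Fin (j + 2)}
    {q' : Fin j → Fin (j + 1)} {ℓ p : Fin (j + 1)} (hp : q ℓ = ℓ.succ.succAbove p)
    (hq' : ∀ c, q (ℓ.succAbove c) = ℓ.succ.succAbove (q' c)) (a : E) (w : Fin j → E) :
    treeWeight R q (ℓ.insertNth a w) =
      (closedBall ((Fin.cons 0 w : Fin (j + 1) → E) p) R).indicator 1 a * treeWeight R q' w := by
  simp only [treeWeight, Fin.prod_univ_succAbove _ ℓ, hp, hq', ← Fin.insertNth_succ_cons,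
    Fin.insertNth_apply_same, Fin.insertNth_apply_succAbove]

variable [MeasurableSpace E] [BorelSpace E]

theorem lintegral_indicator_one_closedBall (μ : Measure E) [μ.IsAddLeftInvariant] (c : E) (R : ℝ) :
    ∫⁻ a, (closedBall c R).indicator 1 a ∂μ = μ (closedBall 0 R) := by
  rw [lintegral_indicator_one measurableSet_closedBall,
    ← measure_preimage_add μ c (closedBall c R), preimage_add_closedBall, sub_self]

variable [SecondCountableTopology E]

theorem measurable_treeWeight (R : ℝ) {j : ℕ} (q : Fin j → Fin (j + 1)) :
    Measurable (treeWeight (E := E) R q) := by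
  refine Finset.measurable_prod _ fun i _ => Measurable.ite ?_ measurable_const measurable_const
  refine measurableSet_le ((measurable_pi_apply i).dist ?_) measurable_const
  cases q i using Fin.cases with
  | zero => exact measurable_const
  | succ k => exact measurable_pi_apply k

theorem lintegral_treeWeight (μ : Measure E) [SigmaFinite μ] [μ.IsAddLeftInvariant] (R : ℝ)
    {j : ℕ} {q : Fin j → Fin (j + 1)} (hq : Acyclic q) :
    ∫⁻ y, treeWeight R q y ∂Measure.pi (fun _ => μ) = μ (closedBall 0 R) ^ j := by
  induction j with
  | zero => simp [treeWeight]
  | succ j ih =>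
    obtain ⟨ℓ, p, q', hq'_acyclic, hp, hq'⟩ := hq.exists_removeLeaf
    rw [← ((measurePreserving_piFinSuccAbove (fun _ => μ) ℓ).symm _).lintegral_comp_emb
      (MeasurableEquiv.measurableEmbedding _), lintegral_prod_symm]
    · change ∫⁻ w, ∫⁻ a, treeWeight R q (ℓ.insertNth a w) ∂μ ∂_ = _
      simp only [treeWeight_insertNth hp hq']
      simp_rw [lintegral_mul_const _ (measurable_one.indicator measurableSet_closedBall),
        lintegral_indicator_one_closedBall]
      rw [lintegral_const_mul _ (measurable_treeWeight R q'), ih hq'_acyclic, pow_succ']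
    · exact ((measurable_treeWeight R q).comp (MeasurableEquiv.measurable _)).aemeasurable

end TreeWeight

theorem boltz_le_ofReal_exp {β a : ℝ} {E : EReal} (hβ : 0 ≤ β) (h : (a : EReal) ≤ E) :
    boltz β E ≤ ENNReal.ofReal (Real.exp (-β * a)) := by
  unfold boltz
  split_ifs with htop
  · exact zero_le
  · have ha : a ≤ E.toReal := by
      simpa using EReal.toReal_le_toReal h (EReal.coe_ne_bot a) htop
    exact ENNReal.ofReal_le_ofReal (Real.exp_le_exp.2 (by nlinarith))

def acyclicMaps (j : ℕ) : Finset (Fin j → Fin (j + 1)) := by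
  classical exact Finset.univ.filter Acyclic

theorem mem_acyclicMaps {j : ℕ} {q : Fin j → Fin (j + 1)} : q ∈ acyclicMaps j ↔ Acyclic q := by
  simp [acyclicMaps]

theorem card_acyclicMaps_le (j : ℕ) : (acyclicMaps j).card ≤ (j + 1) ^ j := by
  classical
  calc (acyclicMaps j).card ≤ Fintype.card (Fin j → Fin (j + 1)) := Finset.card_le_univ _
    _ = (j + 1) ^ j := by simp

variable {d : ℕ} {v : ℝ → EReal} {β R einf : ℝ} {j : ℕ}

theorem exists_acyclic_treeWeight_eq_one (hR : 0 ≤ R) {y : Fin j → EuclideanSpace ℝ (Fin d)}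
    (h : RConn R (Set.range (Fin.cons 0 y : Fin (j + 1) → EuclideanSpace ℝ (Fin d)))) :
    ∃ q, Acyclic q ∧ treeWeight R q y = 1 := by
  obtain ⟨q, hq, hadj⟩ :=
    exists_acyclic_of_reachable _ fun i => preconnected_proximityGraph hR h i 0
  exact ⟨q, hq, treeWeight_eq_one fun i => by simpa using (hadj i).2⟩

theorem indicator_boltz_le_sum_treeWeight (hβ : 0 ≤ β) (hR : 0 ≤ R)
    (hE : ∀ f : Fin (j + 1) → EuclideanSpace ℝ (Fin d),
      ((((j : ℝ) + 1) * einf : ℝ) : EReal) ≤ pairEnergy v f)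
    (y : Fin j → EuclideanSpace ℝ (Fin d)) :
    {y : Fin j → EuclideanSpace ℝ (Fin d) |
        RConn R (Set.range (Fin.cons 0 y : Fin (j + 1) → EuclideanSpace ℝ (Fin d)))}.indicator
      (fun y => boltz β (pairEnergy v (Fin.cons 0 y : Fin (j + 1) → EuclideanSpace ℝ (Fin d)))) y ≤
    ENNReal.ofReal (Real.exp (-β * ((j + 1) * einf))) *
      ∑ q ∈ acyclicMaps j, treeWeight R q y := by
  by_cases hy : RConn R (Set.range (Fin.cons 0 y : Fin (j + 1) → EuclideanSpace ℝ (Fin d)))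
  · obtain ⟨q, hq, hw⟩ := exists_acyclic_treeWeight_eq_one hR hy
    rw [Set.indicator_of_mem hy]
    calc _ ≤ ENNReal.ofReal (Real.exp (-β * ((j + 1) * einf))) := boltz_le_ofReal_exp hβ (hE _)
      _ = ENNReal.ofReal (Real.exp (-β * ((j + 1) * einf))) * treeWeight R q y := by
        rw [hw, mul_one]
      _ ≤ _ := by
        gcongr
        exact Finset.single_le_sum (fun _ _ => zero_le (a := treeWeight R _ y)) (mem_acyclicMaps.2 hq)
  · rw [Set.indicator_of_notMem hy]
    exact zero_le

theorem lintegral_indicator_boltz_le (hβ : 0 ≤ β) (hR : 0 ≤ R)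
    (hE : ∀ f : Fin (j + 1) → EuclideanSpace ℝ (Fin d),
      ((((j : ℝ) + 1) * einf : ℝ) : EReal) ≤ pairEnergy v f) :
    ∫⁻ y : Fin j → EuclideanSpace ℝ (Fin d),
      {y : Fin j → EuclideanSpace ℝ (Fin d) |
          RConn R (Set.range (Fin.cons 0 y : Fin (j + 1) → EuclideanSpace ℝ (Fin d)))}.indicator
        (fun y => boltz β (pairEnergy v (Fin.cons 0 y : Fin (j + 1) → EuclideanSpace ℝ (Fin d)))) y ≤
    ENNReal.ofReal (Real.exp (-β * ((j + 1) * einf))) *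
      ((j + 1) ^ j * volume (closedBall (0 : EuclideanSpace ℝ (Fin d)) R) ^ j) := by
  calc _ ≤ ∫⁻ y, ENNReal.ofReal (Real.exp (-β * ((j + 1) * einf))) *
          ∑ q ∈ acyclicMaps j, treeWeight R q y :=
        lintegral_mono (indicator_boltz_le_sum_treeWeight hβ hR hE)
    _ = ENNReal.ofReal (Real.exp (-β * ((j + 1) * einf))) *
          ∑ _q ∈ acyclicMaps j, volume (closedBall (0 : EuclideanSpace ℝ (Fin d)) R) ^ j := by
        rw [lintegral_const_mul _ (Finset.measurable_sum _ fun q _ => measurable_treeWeight R q),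
          lintegral_finsetSum _ fun q _ => measurable_treeWeight R q, volume_pi]
        congr 1
        exact Finset.sum_congr rfl fun q hq =>
          lintegral_treeWeight volume R (mem_acyclicMaps.1 hq)
    _ ≤ _ := by
        rw [Finset.sum_const, nsmul_eq_mul]
        gcongr
        exact_mod_cast card_acyclicMaps_le j

theorem Zcl_le (hβ : 0 ≤ β) (hR : 0 ≤ R)
    (hE : ∀ f : Fin (j + 1) → EuclideanSpace ℝ (Fin d),
      ((((j : ℝ) + 1) * einf : ℝ) : EReal) ≤ pairEnergy v f) :
    Zcl d v β R j ≤ ENNReal.ofReal (Real.exp (-β * einf) * Real.exp 1) ^ (j + 1) *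
      volume (closedBall (0 : EuclideanSpace ℝ (Fin d)) R) ^ j := by
  have hexp : ENNReal.ofReal (Real.exp (-β * ((j + 1) * einf))) =
      ENNReal.ofReal (Real.exp (-β * einf)) ^ (j + 1) := by
    rw [← ENNReal.ofReal_pow (Real.exp_nonneg _), ← Real.exp_nat_mul]
    push_cast
    ring_nf
  calc Zcl d v β R j ≤ ((j + 1).factorial : ℝ≥0∞)⁻¹ *
        (ENNReal.ofReal (Real.exp (-β * ((j + 1) * einf))) *
          ((j + 1) ^ j * volume (closedBall (0 : EuclideanSpace ℝ (Fin d)) R) ^ j)) := by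
        unfold Zcl
        gcongr
        exact lintegral_indicator_boltz_le hβ hR hE
    _ = ENNReal.ofReal (Real.exp (-β * einf)) ^ (j + 1) *
          ((j + 1) ^ j / (j + 1).factorial) *
          volume (closedBall (0 : EuclideanSpace ℝ (Fin d)) R) ^ j := by
        rw [hexp, div_eq_mul_inv]
        ring
    _ ≤ ENNReal.ofReal (Real.exp (-β * einf)) ^ (j + 1) * ENNReal.ofReal (Real.exp 1) ^ (j + 1) *
          volume (closedBall (0 : EuclideanSpace ℝ (Fin d)) R) ^ j := by
        gcongr
        exact succ_pow_div_factorial_le j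
    _ = _ := by
        rw [ENNReal.ofReal_mul (Real.exp_nonneg _), mul_pow]

end Cluster

theorem cluster_series_converges_general (d : ℕ) (hd : 1 ≤ d)
    (v : ℝ → EReal)
    (einf : ℝ)
    (heinf : ∀ (m : ℕ) (f : Fin (m + 1) → EuclideanSpace ℝ (Fin d)),
      ((((m : ℝ) + 1) * einf : ℝ) : EReal) ≤ pairEnergy v f)
    (β R : ℝ) (hβ : 0 < β) (hR : 0 < R)
    (z : ℝ) (hz : 0 < z)
    (hz2 : z < Real.exp (β * einf) /
      (Real.exp 1 * (volume (Metric.ball (0 : EuclideanSpace ℝ (Fin d)) R)).toReal)) :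
    (∑' j : ℕ, ENNReal.ofReal (z ^ (j + 1)) * Zcl d v β R j) < ⊤ := by
  have : Nontrivial (EuclideanSpace ℝ (Fin d)) :=
    Module.nontrivial_of_finrank_pos (R := ℝ) (by rw [finrank_euclideanSpace_fin]; omega)
  set B := volume (ball (0 : EuclideanSpace ℝ (Fin d)) R)
  have hclosed : volume (closedBall (0 : EuclideanSpace ℝ (Fin d)) R) = B :=
    Measure.addHaar_closedBall_eq_addHaar_ball _ _ _
  have hB : B = ENNReal.ofReal B.toReal := (ENNReal.ofReal_toReal measure_ball_lt_top.ne).symm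
  have hb : 0 < B.toReal := ENNReal.toReal_pos (measure_ball_pos _ _ hR).ne' measure_ball_lt_top.ne
  set ρ := z * (Real.exp (-β * einf) * Real.exp 1)
  have hρ : ρ * B.toReal < 1 := by
    rw [lt_div_iff₀ (by positivity)] at hz2
    calc ρ * B.toReal = z * (Real.exp 1 * B.toReal) * Real.exp (-(β * einf)) := by
          simp only [ρ, neg_mul]; ring
      _ < Real.exp (β * einf) * Real.exp (-(β * einf)) := by gcongr
      _ = 1 := by rw [← Real.exp_add, add_neg_cancel, Real.exp_zero]
  calc _ ≤ ∑' j : ℕ, ENNReal.ofReal ρ ^ (j + 1) * B ^ j := ENNReal.tsum_le_tsum fun j => by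
        rw [ENNReal.ofReal_pow hz.le, ENNReal.ofReal_mul hz.le, mul_pow, mul_assoc, ← hclosed]
        gcongr
        exact Cluster.Zcl_le hβ.le hR.le (heinf j)
    _ < ⊤ := ENNReal.tsum_pow_succ_mul_pow_lt_top ENNReal.ofReal_ne_top
        (by rw [hB, ← ENNReal.ofReal_mul (by positivity)]; exact ENNReal.ofReal_lt_one.2 hρ)

/-- Convergence of the cluster series: if `e_∞` is a lower bound for the energies per
particle `E_k/k` (in particular their infimum, assumed `> -∞`), then for every
`0 < z < exp(β e_∞)/(e |B(0,R)|)` the series `Σ_{k≥1} z^k Z_k^cl(β)` converges; in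
particular the radius of convergence `R^cl(β)` is at least `exp(β e_∞)/(e |B(0,R)|)`. -/
theorem cluster_series_converges (d : ℕ) (hd : 1 ≤ d)
    (v : ℝ → EReal) (hmeas : Measurable v) (hbot : ∀ r, v r ≠ ⊥)
    (einf : ℝ)
    (heinf : ∀ (m : ℕ) (f : Fin (m + 1) → EuclideanSpace ℝ (Fin d)),
      ((((m : ℝ) + 1) * einf : ℝ) : EReal) ≤ pairEnergy v f)
    (β R : ℝ) (hβ : 0 < β) (hR : 0 < R)
    (z : ℝ) (hz : 0 < z)
    (hz2 : z < Real.exp (β * einf) /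
      (Real.exp 1 * (volume (Metric.ball (0 : EuclideanSpace ℝ (Fin d)) R)).toReal)) :
    (∑' j : ℕ, ENNReal.ofReal (z ^ (j + 1)) * Zcl d v β R j) < ⊤ :=
  cluster_series_converges_general d hd v einf heinf β R hβ hR z hz hz2
end
end

section
/- Let d ≥ 1, let v : (0,∞) → ℝ ∪ {+∞} be measurable, β > 0, R > 0, and let k ≥ 1 be an integer. Let Λ ⊆ ℝ^d be a Borel set of finite Lebesgue measure |Λ|. Then (1/k!) ∫_{(ℝ^d)^k} exp(−βU(x₁,…,x_k)) · 1({x₁,…,x_k} is R-connected) · 1(∃ j ∈ {1,…,k} : x_j ∈ Λ) dx₁⋯dx_k ≤ k·|Λ|·Z_k^cl(β). -/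
open MeasureTheory
open scoped ENNReal

noncomputable section

/-!
By the union bound over the index `i` of a particle lying in `Λ`, it suffices to integrate with
the constraint `x i ∈ Λ`. The weight of an `R`-connected configuration is invariant under
relabelling the particles and under a common translation. Relabelling moves particle `i` to the
front and translating by `-x i` pins it at the origin, so the constrained integral factors as
`|Λ|` times the integral over the configurations `(0, y)`, which is `k! Z_k^cl(β)`; summing over
the `k` indices gives the bound.
-/

open Relation

section ReflTransGen

variable {X ι : Type*} [MeasurableSpace X] {r : X → ι → ι → Prop}

lemma measurableSet_setOf_isChain (hr : ∀ a b, MeasurableSet {x | r x a b}) (l : List ι) :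
    MeasurableSet {x | l.IsChain (r x)} := by
  induction l with
  | nil => simp
  | cons a l ih =>
    cases l with
    | nil => simp
    | cons b l => simpa only [List.isChain_cons_cons, Set.ofPred_and] using (hr a b).inter ih

lemma measurableSet_setOf_reflTransGen [Countable ι] (hr : ∀ a b, MeasurableSet {x | r x a b})
    (a b : ι) : MeasurableSet {x | ReflTransGen (r x) a b} := by
  have chains : {x | ReflTransGen (r x) a b} = ⋃ (l : List ι)
      (_ : (a :: l).getLast (List.cons_ne_nil _ _) = b), {x | (a :: l).IsChain (r x)} := by
    ext x
    simp only [Set.mem_ofPred_eq, Set.mem_iUnion]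
    exact ⟨fun h => (List.exists_isChain_cons_of_relationReflTransGen h).imp fun _ h => ⟨h.2, h.1⟩,
      fun ⟨l, hl, hc⟩ => List.relationReflTransGen_of_exists_isChain_cons l hc hl⟩
  rw [chains]
  exact .iUnion fun l => .iUnion fun _ => measurableSet_setOf_isChain hr _

end ReflTransGen

section Energy

variable {d m : ℕ} {v : ℝ → EReal} {β : ℝ}

lemma measurable_boltz : Measurable (boltz β) :=
  Measurable.ite (measurableSet_singleton ⊤) measurable_const (by fun_prop)

lemma measurable_pairEnergy (hv : Measurable v) :
    Measurable (pairEnergy v : (Fin m → EuclideanSpace ℝ (Fin d)) → EReal) :=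
  Finset.measurable_sum _ fun _ _ => hv.comp ((measurable_pi_apply _).dist (measurable_pi_apply _))

lemma pairEnergy_eq_sum_sym2 (v : ℝ → EReal) (x : Fin m → EuclideanSpace ℝ (Fin d)) :
    pairEnergy v x = ∑ e ∈ (Finset.univ : Finset (Fin m)).sym2 with ¬ e.IsDiag,
      Sym2.lift ⟨fun a b => v (dist (x a) (x b)), fun a b => by simp only [dist_comm]⟩ e := by
  rw [Finset.sum_sym2_filter_not_isDiag, pairEnergy]
  refine Finset.sum_congr ?_ fun _ _ => rfl
  ext p
  simpa using fun h : p.1 < p.2 => h.ne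

lemma pairEnergy_comp_perm (v : ℝ → EReal) (x : Fin m → EuclideanSpace ℝ (Fin d))
    (σ : Equiv.Perm (Fin m)) : pairEnergy v (x ∘ σ) = pairEnergy v x := by
  simp only [pairEnergy_eq_sum_sym2]
  refine Finset.sum_nbij' (Sym2.map σ) (Sym2.map σ.symm) ?_ ?_ ?_ ?_ ?_ <;>
    · intro e
      induction e using Sym2.ind
      simp

lemma pairEnergy_const_add (v : ℝ → EReal) (a : EuclideanSpace ℝ (Fin d))
    (x : Fin m → EuclideanSpace ℝ (Fin d)) :
    pairEnergy v (fun k => a + x k) = pairEnergy v x := by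
  simp only [pairEnergy, dist_add_left]

end Energy

section Connectivity

variable {d : ℕ} {R : ℝ} {ι : Type*}

-- Coinciding particles are a single vertex of the graph in `RConn`.
lemma rConn_range_iff (x : ι → EuclideanSpace ℝ (Fin d)) :
    RConn R (Set.range x) ↔
      ∀ p q, ReflTransGen (fun p q => x p = x q ∨ dist (x p) (x q) ≤ R) p q := by
  refine ⟨fun h p q => ?_, ?_⟩
  · suffices ∀ b, ReflTransGen (fun s t => s ∈ Set.range x ∧ t ∈ Set.range x ∧ s ≠ t ∧
        dist s t ≤ R) (x p) b → ∀ q, x q = b →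
        ReflTransGen (fun p q => x p = x q ∨ dist (x p) (x q) ≤ R) p q from
      this _ (h _ ⟨p, rfl⟩ _ ⟨q, rfl⟩) q rfl
    intro b hb
    induction hb with
    | refl => exact fun q hq => .single (.inl hq.symm)
    | tail _ hbc ih =>
      obtain ⟨⟨r, rfl⟩, -, -, hdist⟩ := hbc
      rintro q rfl
      exact (ih r rfl).tail (.inr hdist)
  · rintro h _ ⟨p, rfl⟩ _ ⟨q, rfl⟩
    refine (h p q).lift' x fun a b hab => ?_
    by_cases heq : x a = x b
    · rw [Function.onFun, heq]
    · exact .single ⟨⟨a, rfl⟩, ⟨b, rfl⟩, heq, hab.resolve_left heq⟩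

lemma rConn_range_const_add (a : EuclideanSpace ℝ (Fin d)) (x : ι → EuclideanSpace ℝ (Fin d)) :
    RConn R (Set.range fun k => a + x k) ↔ RConn R (Set.range x) := by
  simp only [rConn_range_iff, add_right_inj, dist_add_left]

lemma measurableSet_setOf_rConn_range [Countable ι] :
    MeasurableSet {x : ι → EuclideanSpace ℝ (Fin d) | RConn R (Set.range x)} := by
  simp only [rConn_range_iff, Set.ofPred_forall]
  refine .iInter fun p => .iInter fun q => measurableSet_setOf_reflTransGen (fun a b => ?_) p q
  exact (measurableSet_eq_fun (measurable_pi_apply a) (measurable_pi_apply b)).union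
    (measurableSet_le ((measurable_pi_apply a).dist (measurable_pi_apply b)) measurable_const)

end Connectivity

lemma lintegral_indicator_iUnion_le {α ι : Type*} [MeasurableSpace α] {μ : Measure α}
    [Countable ι] {s : ι → Set α} (hs : ∀ i, MeasurableSet (s i)) (f : α → ℝ≥0∞) :
    ∫⁻ x, (⋃ i, s i).indicator f x ∂μ ≤ ∑' i, ∫⁻ x, (s i).indicator f x ∂μ := by
  simp only [lintegral_indicator (MeasurableSet.iUnion hs), lintegral_indicator (hs _)]
  exact lintegral_iUnion_le s f

section Integral

variable {E : Type*} [AddGroup E] [MeasureSpace E] [MeasurableAdd E]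
  [SigmaFinite (volume : Measure E)] [(volume : Measure E).IsAddLeftInvariant] {m : ℕ}

lemma lintegral_cons_eq_lintegral_cons_zero {F : (Fin (m + 1) → E) → ℝ≥0∞}
    (hF : ∀ a x, F (fun k => a + x k) = F x) (a : E) :
    ∫⁻ y : Fin m → E, F (Fin.cons a y) = ∫⁻ y, F (Fin.cons 0 y) := by
  rw [← lintegral_add_left_eq_self (fun y => F (Fin.cons a y)) (fun _ => a)]
  refine lintegral_congr fun y => ?_
  rw [← hF a (Fin.cons 0 y)]
  congr 1 with k
  cases k using Fin.cases <;> simp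

lemma lintegral_indicator_apply_mem_eq {F : (Fin (m + 1) → E) → ℝ≥0∞} (hF : Measurable F)
    (hperm : ∀ x (σ : Equiv.Perm (Fin (m + 1))), F (x ∘ σ) = F x)
    (htrans : ∀ a x, F (fun k => a + x k) = F x) {Λ : Set E} (hΛ : MeasurableSet Λ)
    (i : Fin (m + 1)) :
    ∫⁻ x, {x : Fin (m + 1) → E | x i ∈ Λ}.indicator F x
      = volume Λ * ∫⁻ y : Fin m → E, F (Fin.cons 0 y) := by
  set e := MeasurableEquiv.piFinSuccAbove (fun _ : Fin (m + 1) => E) i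
  set G := {x : Fin (m + 1) → E | x i ∈ Λ}.indicator F
  have hG : Measurable G := hF.indicator (measurable_pi_apply i hΛ)
  have hsplit (a : E) (y : Fin m → E) :
      G (e.symm (a, y)) = Λ.indicator (fun _ => F (Fin.cons a y)) a := by
    have he : e.symm (a, y) = i.insertNth a y := rfl
    have hcons : F (i.insertNth a y) = F (Fin.cons a y) := by
      rw [← Fin.cons_comp_cycleRange, hperm]
    by_cases ha : a ∈ Λ <;> simp [G, he, ha, hcons]
  rw [← (volume_preserving_piFinSuccAbove _ i).symm.lintegral_comp_emb e.symm.measurableEmbedding,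
    Measure.volume_eq_prod,
    lintegral_prod (fun z => G (e.symm z)) (hG.comp e.symm.measurable).aemeasurable]
  calc ∫⁻ a, ∫⁻ y, G (e.symm (a, y))
      = ∫⁻ a, Λ.indicator (fun _ => ∫⁻ y : Fin m → E, F (Fin.cons 0 y)) a := by
        refine lintegral_congr fun a => ?_
        simp only [hsplit]
        by_cases ha : a ∈ Λ <;> simp [ha, lintegral_cons_eq_lintegral_cons_zero htrans]
    _ = volume Λ * ∫⁻ y : Fin m → E, F (Fin.cons 0 y) := by
        rw [lintegral_indicator_const hΛ, mul_comm]

end Integral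

section ClusterWeight

variable {d m : ℕ} {v : ℝ → EReal} {β R : ℝ}

def clusterWeight (v : ℝ → EReal) (β R : ℝ) :
    (Fin m → EuclideanSpace ℝ (Fin d)) → ℝ≥0∞ :=
  {x | RConn R (Set.range x)}.indicator fun x => boltz β (pairEnergy v x)

lemma measurable_clusterWeight (hv : Measurable v) :
    Measurable (clusterWeight v β R : (Fin m → EuclideanSpace ℝ (Fin d)) → ℝ≥0∞) :=
  (measurable_boltz.comp (measurable_pairEnergy hv)).indicator measurableSet_setOf_rConn_range

lemma clusterWeight_comp_perm (x : Fin m → EuclideanSpace ℝ (Fin d)) (σ : Equiv.Perm (Fin m)) :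
    clusterWeight v β R (x ∘ σ) = clusterWeight v β R x := by
  by_cases h : RConn R (Set.range x) <;>
    simp [clusterWeight, h, σ.surjective.range_comp, pairEnergy_comp_perm]

lemma clusterWeight_const_add (a : EuclideanSpace ℝ (Fin d))
    (x : Fin m → EuclideanSpace ℝ (Fin d)) :
    clusterWeight v β R (fun k => a + x k) = clusterWeight v β R x := by
  by_cases h : RConn R (Set.range x) <;>
    simp [clusterWeight, h, rConn_range_const_add, pairEnergy_const_add]

end ClusterWeight

theorem connected_cluster_integral_le_general (d : ℕ)
    (v : ℝ → EReal) (hmeas : Measurable v)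
    (β R : ℝ) (j : ℕ)
    (Λ : Set (EuclideanSpace ℝ (Fin d))) (hΛ : MeasurableSet Λ) :
    ((j + 1).factorial : ℝ≥0∞)⁻¹ *
      (∫⁻ x : Fin (j + 1) → EuclideanSpace ℝ (Fin d),
        Set.indicator
          {x : Fin (j + 1) → EuclideanSpace ℝ (Fin d) |
            RConn R (Set.range x) ∧ ∃ i, x i ∈ Λ}
          (fun x => boltz β (pairEnergy v x)) x)
      ≤ ((j : ℝ≥0∞) + 1) * volume Λ * Zcl d v β R j := by
  have hunion : {x : Fin (j + 1) → EuclideanSpace ℝ (Fin d) |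
        RConn R (Set.range x) ∧ ∃ i, x i ∈ Λ}.indicator (fun x => boltz β (pairEnergy v x))
      = (⋃ i, {x | x i ∈ Λ}).indicator (clusterWeight v β R) := by
    rw [clusterWeight, Set.indicator_indicator]
    congr 1
    ext x
    simp [and_comm]
  have hcoord (i : Fin (j + 1)) :
      ∫⁻ x, {x | x i ∈ Λ}.indicator (clusterWeight v β R) x
        = volume Λ * ∫⁻ y, clusterWeight v β R (Fin.cons 0 y) :=
    lintegral_indicator_apply_mem_eq (measurable_clusterWeight hmeas) clusterWeight_comp_perm
      clusterWeight_const_add hΛ i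
  have hZcl : Zcl d v β R j
      = ((j + 1).factorial : ℝ≥0∞)⁻¹ * ∫⁻ y, clusterWeight v β R (Fin.cons 0 y) := rfl
  calc _ ≤ ((j + 1).factorial : ℝ≥0∞)⁻¹ *
        ∑' i, ∫⁻ x, {x | x i ∈ Λ}.indicator (clusterWeight v β R) x := by
        rw [hunion]
        gcongr
        exact lintegral_indicator_iUnion_le (fun i => measurable_pi_apply i hΛ) _
    _ = _ := by
        simp only [tsum_fintype, hcoord, Finset.sum_const, Finset.card_univ, Fintype.card_fin,
          nsmul_eq_mul, hZcl]
        push_cast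
        ring

/-- Mürmann's symmetry-and-translation bound: the (1/k!)-normalized integral over all
`k`-point configurations that are `R`-connected and have at least one point in `Λ` is
bounded by `k |Λ| Z_k^cl(β)`, for `k = j+1 ≥ 1`. -/
theorem connected_cluster_integral_le (d : ℕ) (hd : 1 ≤ d)
    (v : ℝ → EReal) (hmeas : Measurable v) (hbot : ∀ r, v r ≠ ⊥)
    (β R : ℝ) (hβ : 0 < β) (hR : 0 < R) (j : ℕ)
    (Λ : Set (EuclideanSpace ℝ (Fin d))) (hΛ : MeasurableSet Λ)
    (hΛfin : volume Λ < ⊤) :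
    ((j + 1).factorial : ℝ≥0∞)⁻¹ *
      (∫⁻ x : Fin (j + 1) → EuclideanSpace ℝ (Fin d),
        Set.indicator
          {x : Fin (j + 1) → EuclideanSpace ℝ (Fin d) |
            RConn R (Set.range x) ∧ ∃ i, x i ∈ Λ}
          (fun x => boltz β (pairEnergy v x)) x)
      ≤ ((j : ℝ≥0∞) + 1) * volume Λ * Zcl d v β R j :=
  connected_cluster_integral_le_general d v hmeas β R j Λ hΛ

end
end
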